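/- Let G be a graph and v a vertex of G with at least one neighbor w. For any partitions (X1,X2) and (Y1,Y2) of V(G)−{v}, ρ_{G∖v}(X1) + ρ_{(G∧vw)∖v}(Y1) ≥ ρ_G(X1∩Y1) + ρ_G(X2∩Y2) − 1. -/

import Mathlib

open Finset

variable {V : Type} [Fintype V] [DecidableEq V]

open scoped Classical

/-- The rank over GF(2) of the `X × Y` submatrix of the adjacency matrix of `G`. -/
noncomputable def cutRankOn (G : SimpleGraph V) (X Y : Finset V) : ℕ :=
  (Matrix.of (fun (i : ↥X) (j : ↥Y) => if G.Adj i.1 j.1 then (1 : ZMod 2) else 0)).rank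

/-- The cut-rank of `X` in the graph `G` restricted to the vertex set `S`:
the rank over GF(2) of the `X × (S \ X)` submatrix of the adjacency matrix. -/
noncomputable def cutRank (G : SimpleGraph V) (S X : Finset V) : ℕ :=
  cutRankOn G X (S \ X)

/-- `A` gives a split of the graph `G` restricted to the vertex set `S`. -/
def IsSplit (G : SimpleGraph V) (S A : Finset V) : Prop :=
  A ⊆ S ∧ cutRank G S A ≤ 1 ∧ 2 ≤ A.card ∧ 2 ≤ (S \ A).card

/-- The graph `G` restricted to the vertex set `S` is prime: connected and with no split. -/
def IsPrime (G : SimpleGraph V) (S : Finset V) : Prop :=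
  (G.induce (↑S : Set V)).Connected ∧ ∀ A, ¬ IsSplit G S A

/-- `G` restricted to `S` is `k⁺ˡ`-rank-connected. -/
def RankConn (G : SimpleGraph V) (S : Finset V) (k l : ℤ) : Prop :=
  ∀ X ⊆ S, (cutRank G S X : ℤ) < k →
    min (X.card : ℤ) (((S \ X).card : ℤ)) < k + l

/-- `G` restricted to `S` is `k`-rank-connected. -/
def RankConnAll (G : SimpleGraph V) (S : Finset V) (k : ℤ) : Prop :=
  ∀ m : ℤ, m ≤ k → RankConn G S m 0

def SideA (G : SimpleGraph V) (v w x : V) : Prop := G.Adj v x ∧ ¬ G.Adj w x ∧ x ≠ w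
def SideB (G : SimpleGraph V) (v w x : V) : Prop := G.Adj w x ∧ ¬ G.Adj v x ∧ x ≠ v
def SideC (G : SimpleGraph V) (v w x : V) : Prop := G.Adj v x ∧ G.Adj w x

/-- `x` and `y` lie in different ones among the three sets
`N(v)−N(w)−{w}`, `N(w)−N(v)−{v}`, `N(v)∩N(w)`. -/
def PivotToggle (G : SimpleGraph V) (v w x y : V) : Prop :=
  (SideA G v w x ∧ SideB G v w y) ∨ (SideB G v w x ∧ SideA G v w y) ∨
  (SideA G v w x ∧ SideC G v w y) ∨ (SideC G v w x ∧ SideA G v w y) ∨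
  (SideB G v w x ∧ SideC G v w y) ∨ (SideC G v w x ∧ SideB G v w y)

set_option linter.unusedSectionVars false in
lemma pivotToggle_symm {G : SimpleGraph V} {v w x y : V}
    (h : PivotToggle G v w x y) : PivotToggle G v w y x := by
  unfold PivotToggle at h ⊢; tauto

/-- The graph `G ∧ vw` obtained by pivoting the edge `vw`: toggle adjacency across the
three sets and swap the labels of `v` and `w`. -/
def pivot (G : SimpleGraph V) (v w : V) : SimpleGraph V where
  Adj a b := a ≠ b ∧
    Xor' (G.Adj (Equiv.swap v w a) (Equiv.swap v w b))
         (PivotToggle G v w (Equiv.swap v w a) (Equiv.swap v w b))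
  symm := by
    constructor
    intro a b h
    obtain ⟨hne, hx⟩ := h
    refine ⟨hne.symm, ?_⟩
    have hA : G.Adj (Equiv.swap v w b) (Equiv.swap v w a) ↔
        G.Adj (Equiv.swap v w a) (Equiv.swap v w b) := SimpleGraph.adj_comm _ _ _
    have hT : PivotToggle G v w (Equiv.swap v w b) (Equiv.swap v w a) ↔
        PivotToggle G v w (Equiv.swap v w a) (Equiv.swap v w b) :=
      ⟨pivotToggle_symm, pivotToggle_symm⟩
    rw [hA, hT]
    exact hx
  loopless := by constructor; intro a h; exact h.1 rfl

/-- One pivot step along an edge. -/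
def PivotStep (G H : SimpleGraph V) : Prop := ∃ v w, G.Adj v w ∧ H = pivot G v w

/-- Pivot-equivalence: a sequence of pivots. -/
def PivotEquiv : SimpleGraph V → SimpleGraph V → Prop := Relation.ReflTransGen PivotStep

/-- `A` is a fully closed set of `G` restricted to `S`. -/
def FullyClosed (G : SimpleGraph V) (S A : Finset V) : Prop :=
  A ⊆ S ∧ cutRank G S A = 2 ∧ 2 < A.card ∧
    ∀ u ∈ S, u ∉ A → cutRank G S A < cutRank G S (insert u A)

/-- `{a,b,c}` is a triplet of `G` (on vertex set `univ`). -/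
def Triplet (G : SimpleGraph V) (a b c : V) : Prop :=
  cutRank G Finset.univ {a, b, c} = 2 ∧
  ∀ x ∈ ({a, b, c} : Finset V),
    cutRank G (Finset.univ \ {x}) (({a, b, c} : Finset V) \ {x}) = 2

/-- `B` is a `k`-branched set of `G` restricted to `S`. -/
inductive KBranched (G : SimpleGraph V) (S : Finset V) (k : ℕ) : Finset V → Prop
  | single (v : V) (hv : v ∈ S) (h : cutRank G S {v} ≤ k) : KBranched G S k {v}
  | split (B B' : Finset V) (hB : B ⊆ S) (h : cutRank G S B ≤ k)
      (h1 : B' ⊆ B) (h2 : B'.Nonempty) (h3 : B' ≠ B)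
      (hb1 : KBranched G S k B') (hb2 : KBranched G S k (B \ B')) : KBranched G S k B

/-- The rank-width of `G` restricted to `S`: the least `k` such that `S` is `k`-branched
(equivalently, the minimum width of a rank-decomposition). -/
noncomputable def rankWidth (G : SimpleGraph V) (S : Finset V) : ℕ :=
  sInf {k | S = ∅ ∨ KBranched G S k S}

/-- `A` is a titanic set of `G` restricted to `S`. -/
def Titanic (G : SimpleGraph V) (S A : Finset V) : Prop :=
  ∀ A1 A2 A3 : Finset V, A1 ∪ A2 ∪ A3 = A →
    Disjoint A1 A2 → Disjoint A1 A3 → Disjoint A2 A3 →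
    cutRank G S A ≤ cutRank G S A1 ∨ cutRank G S A ≤ cutRank G S A2 ∨
      cutRank G S A ≤ cutRank G S A3

/-!
The rank of submatrices of a fixed matrix is submodular in the pair (rows, columns). Applied to
the rows `X₁, Y₁ + v` and columns `X₂, Y₂ + v` of the adjacency matrix `A` of `G` over GF(2), it
bounds the left-hand side by `ρ_{G∖v}(X₁) + rank A[Y₁ + v, Y₂ + v]`. Say `w ∈ Y₁` (otherwise
transpose). Clearing row `w` with column `v`, using `A w v = 1`, and then dropping column `v`
costs at most one in rank and leaves the Schur complement of the entry `A w v`; its rows are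
combinations of the rows of the `Y₁ × Y₂` adjacency matrix of `G ∧ vw`.
-/

open Module Submodule

theorem Submodule.finrank_map_add_finrank_inf_ker {K M N : Type*} [DivisionRing K]
    [AddCommGroup M] [Module K M] [AddCommGroup N] [Module K N] [FiniteDimensional K M]
    (f : M →ₗ[K] N) (p : Submodule K M) :
    finrank K (p.map f) + finrank K ↥(p ⊓ LinearMap.ker f) = finrank K p := by
  have h := LinearMap.finrank_range_add_finrank_ker (f.domRestrict p)
  rw [LinearMap.range_domRestrict, LinearMap.ker_domRestrict] at h
  rwa [← (comapSubtypeEquivOfLe (inf_le_left : p ⊓ LinearMap.ker f ≤ p)).finrank_eq, comap_inf,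
    comap_subtype_self, top_inf_eq]

theorem Submodule.finrank_map_sup_add_finrank_map_inf_le {K M N₁ N₂ N₃ N₄ : Type*}
    [DivisionRing K] [AddCommGroup M] [Module K M] [FiniteDimensional K M]
    [AddCommGroup N₁] [Module K N₁] [AddCommGroup N₂] [Module K N₂]
    [AddCommGroup N₃] [Module K N₃] [AddCommGroup N₄] [Module K N₄]
    (f₁ : M →ₗ[K] N₁) (f₂ : M →ₗ[K] N₂) (g : M →ₗ[K] N₃) (h : M →ₗ[K] N₄)
    (hg : LinearMap.ker f₁ ⊔ LinearMap.ker f₂ ≤ LinearMap.ker g)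
    (hh : LinearMap.ker f₁ ⊓ LinearMap.ker f₂ ≤ LinearMap.ker h) (W₁ W₂ : Submodule K M) :
    finrank K ((W₁ ⊔ W₂).map g) + finrank K ((W₁ ⊓ W₂).map h) ≤
      finrank K (W₁.map f₁) + finrank K (W₂.map f₂) := by
  have hsup : W₁ ⊓ LinearMap.ker f₁ ⊔ W₂ ⊓ LinearMap.ker f₂ ≤ (W₁ ⊔ W₂) ⊓ LinearMap.ker g :=
    le_inf (sup_le_sup inf_le_left inf_le_left) ((sup_le_sup inf_le_right inf_le_right).trans hg)
  have hinf : W₁ ⊓ LinearMap.ker f₁ ⊓ (W₂ ⊓ LinearMap.ker f₂) ≤ W₁ ⊓ W₂ ⊓ LinearMap.ker h :=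
    le_inf (inf_le_inf inf_le_left inf_le_left) ((inf_le_inf inf_le_right inf_le_right).trans hh)
  have := finrank_mono hsup
  have := finrank_mono hinf
  have := finrank_sup_add_finrank_inf_eq (W₁ ⊓ LinearMap.ker f₁) (W₂ ⊓ LinearMap.ker f₂)
  have := finrank_sup_add_finrank_inf_eq W₁ W₂
  have := finrank_map_add_finrank_inf_ker g (W₁ ⊔ W₂)
  have := finrank_map_add_finrank_inf_ker h (W₁ ⊓ W₂)
  have := finrank_map_add_finrank_inf_ker f₁ W₁
  have := finrank_map_add_finrank_inf_ker f₂ W₂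
  omega

theorem LinearMap.mem_ker_funLeft_coe {K m : Type*} [Semiring K] {R : Finset m} {x : m → K} :
    x ∈ LinearMap.ker (LinearMap.funLeft K K ((↑) : R → m)) ↔ ∀ i ∈ R, x i = 0 := by
  simp [funext_iff]

namespace Matrix

variable {K m n : Type*} [Field K]

theorem rank_le_rank_of_forall_row_mem {m' : Type*} [Fintype m] [Fintype m'] [Fintype n]
    {M : Matrix m' n K} {N : Matrix m n K} (h : ∀ i, M.row i ∈ span K (Set.range N.row)) :
    M.rank ≤ N.rank := by
  rw [rank_eq_finrank_span_row, rank_eq_finrank_span_row]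
  exact finrank_mono (span_le.2 (Set.range_subset_iff.2 h))

theorem rank_le_rank_add_one_of_forall_col_mem {n' : Type*} [Fintype m] [Fintype n] [Fintype n']
    {M : Matrix m n K} {N : Matrix m n' K} {u : m → K}
    (h : ∀ j, M.col j ∈ span K (insert u (Set.range N.col))) : M.rank ≤ N.rank + 1 := by
  rw [rank_eq_finrank_span_cols, rank_eq_finrank_span_cols]
  calc finrank K (span K (Set.range M.col))
      ≤ finrank K (span K (insert u (Set.range N.col))) :=
        finrank_mono (span_le.2 (Set.range_subset_iff.2 h))
    _ ≤ finrank K (K ∙ u) + finrank K (span K (Set.range N.col)) := by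
        rw [span_insert]
        exact finrank_add_le_finrank_add_finrank _ _
    _ ≤ finrank K (span K (Set.range N.col)) + 1 := by
        rw [add_comm]
        gcongr
        simpa using finrank_span_le_card ({u} : Set (m → K))

noncomputable def rankOn (A : Matrix m n K) (R : Finset m) (C : Finset n) : ℕ :=
  (A.submatrix ((↑) : R → m) ((↑) : C → n)).rank

theorem rankOn_eq_finrank_map (A : Matrix m n K) (R : Finset m) (C : Finset n) :
    A.rankOn R C =
      finrank K ((span K (A.col '' C)).map (LinearMap.funLeft K K ((↑) : R → m))) := by
  rw [rankOn, rank_eq_finrank_span_cols, map_span, ← Set.image_comp, Set.image_eq_range]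
  rfl

theorem rankOn_transpose (A : Matrix m n K) (R : Finset m) (C : Finset n) :
    Aᵀ.rankOn C R = A.rankOn R C := by
  rw [rankOn, rankOn, ← transpose_submatrix, rank_transpose]

theorem rankOn_inter_union_add_rankOn_union_inter_le [Fintype m] [DecidableEq m] [DecidableEq n]
    (A : Matrix m n K) (R₁ R₂ : Finset m) (C₁ C₂ : Finset n) :
    A.rankOn (R₁ ∩ R₂) (C₁ ∪ C₂) + A.rankOn (R₁ ∪ R₂) (C₁ ∩ C₂) ≤
      A.rankOn R₁ C₁ + A.rankOn R₂ C₂ := by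
  rw [rankOn_eq_finrank_map, rankOn_eq_finrank_map, rankOn_eq_finrank_map, rankOn_eq_finrank_map,
    Finset.coe_union, Set.image_union, span_union]
  have hC : span K (A.col '' ↑(C₁ ∩ C₂)) ≤ span K (A.col '' ↑C₁) ⊓ span K (A.col '' ↑C₂) := by
    rw [Finset.coe_inter]
    exact le_inf (span_mono (Set.image_mono Set.inter_subset_left))
      (span_mono (Set.image_mono Set.inter_subset_right))
  have hK₁ : LinearMap.ker (LinearMap.funLeft K K ((↑) : R₁ → m)) ⊔
      LinearMap.ker (LinearMap.funLeft K K ((↑) : R₂ → m)) ≤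
      LinearMap.ker (LinearMap.funLeft K K ((↑) : ↥(R₁ ∩ R₂) → m)) := by
    refine sup_le (fun x hx => ?_) (fun x hx => ?_) <;>
      simp only [LinearMap.mem_ker_funLeft_coe, mem_inter] at hx ⊢
    exacts [fun i hi => hx i hi.1, fun i hi => hx i hi.2]
  have hK₂ : LinearMap.ker (LinearMap.funLeft K K ((↑) : R₁ → m)) ⊓
      LinearMap.ker (LinearMap.funLeft K K ((↑) : R₂ → m)) ≤
      LinearMap.ker (LinearMap.funLeft K K ((↑) : ↥(R₁ ∪ R₂) → m)) := by
    simp only [SetLike.le_def, Submodule.mem_inf, LinearMap.mem_ker_funLeft_coe, mem_union]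
    exact fun x hx i hi => hi.elim (hx.1 i) (hx.2 i)
  exact (Nat.add_le_add_left (finrank_mono (map_mono hC)) _).trans
    (finrank_map_sup_add_finrank_map_inf_le _ _ _ _ hK₁ hK₂ _ _)

end Matrix

open SimpleGraph

theorem cutRankOn_eq_rankOn {V : Type} (G : SimpleGraph V) (X Y : Finset V) :
    cutRankOn G X Y = (G.adjMatrix (ZMod 2)).rankOn X Y := rfl

theorem cutRankOn_comm {V : Type} (G : SimpleGraph V) (X Y : Finset V) :
    cutRankOn G X Y = cutRankOn G Y X := by
  rw [cutRankOn_eq_rankOn, cutRankOn_eq_rankOn, ← Matrix.rankOn_transpose, transpose_adjMatrix]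

theorem cutRankOn_inter_union_add_le (G : SimpleGraph V) (R₁ R₂ C₁ C₂ : Finset V) :
    cutRankOn G (R₁ ∩ R₂) (C₁ ∪ C₂) + cutRankOn G (R₁ ∪ R₂) (C₁ ∩ C₂) ≤
      cutRankOn G R₁ C₁ + cutRankOn G R₂ C₂ := by
  simp only [cutRankOn_eq_rankOn]
  exact Matrix.rankOn_inter_union_add_rankOn_union_inter_le _ _ _ _ _

theorem pivotToggle_iff {V : Type} {G : SimpleGraph V} {v w x y : V} (hxv : x ≠ v) (hxw : x ≠ w)
    (hyv : y ≠ v) (hyw : y ≠ w) :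
    PivotToggle G v w x y ↔ Xor (G.Adj v x ∧ G.Adj w y) (G.Adj w x ∧ G.Adj v y) := by
  simp only [PivotToggle, SideA, SideB, SideC, Xor, ne_eq, hxv, hxw, hyv, hyw, not_false_eq_true,
    and_true]
  tauto

theorem pivot_adj_of_ne {G : SimpleGraph V} {v w x y : V} (hxv : x ≠ v) (hxw : x ≠ w)
    (hyv : y ≠ v) (hyw : y ≠ w) :
    (pivot G v w).Adj x y ↔
      Xor (G.Adj x y) (Xor (G.Adj v x ∧ G.Adj w y) (G.Adj w x ∧ G.Adj v y)) := by
  simp only [pivot, Equiv.swap_apply_of_ne_of_ne hxv hxw, Equiv.swap_apply_of_ne_of_ne hyv hyw,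
    pivotToggle_iff hxv hxw hyv hyw]
  refine and_iff_right_of_imp ?_
  rintro (h : Xor _ _) rfl
  simp [and_comm] at h

theorem pivot_adj_right_of_ne {G : SimpleGraph V} {v w y : V} (hyv : y ≠ v) (hyw : y ≠ w) :
    (pivot G v w).Adj w y ↔ G.Adj v y := by
  simp only [pivot, Equiv.swap_apply_right, Equiv.swap_apply_of_ne_of_ne hyv hyw]
  show w ≠ y ∧ Xor (G.Adj v y) (PivotToggle G v w v y) ↔ G.Adj v y
  have : ¬ PivotToggle G v w v y := by simp [PivotToggle, SideA, SideB, SideC]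
  simp [xor_def, this, hyw.symm]

theorem adjMatrix_pivot_apply {G : SimpleGraph V} {v w x y : V} (hxv : x ≠ v) (hxw : x ≠ w)
    (hyv : y ≠ v) (hyw : y ≠ w) :
    (pivot G v w).adjMatrix (ZMod 2) x y = G.adjMatrix (ZMod 2) x y +
      G.adjMatrix (ZMod 2) v x * G.adjMatrix (ZMod 2) w y +
      G.adjMatrix (ZMod 2) w x * G.adjMatrix (ZMod 2) v y := by
  simp only [adjMatrix_apply, pivot_adj_of_ne hxv hxw hyv hyw]
  by_cases G.Adj x y <;> by_cases G.Adj v x <;> by_cases G.Adj w y <;> by_cases G.Adj w x <;>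
    by_cases G.Adj v y <;> simp_all <;> decide

theorem adjMatrix_pivot_apply_right {G : SimpleGraph V} {v w y : V} (hyv : y ≠ v)
    (hyw : y ≠ w) : (pivot G v w).adjMatrix (ZMod 2) w y = G.adjMatrix (ZMod 2) v y := by
  simp only [adjMatrix_apply, pivot_adj_right_of_ne hyv hyw]

/-- The Schur complement `A[R, C] - A[R, v] A[w, C]` of the entry `A w v` of the adjacency
matrix `A` over GF(2) (where `-` is `+`), with the column `v` left out. -/
noncomputable def schurOn {V : Type} (G : SimpleGraph V) (v w : V) (R C : Finset V) :
    Matrix R C (ZMod 2) :=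
  Matrix.of fun r c =>
    G.adjMatrix (ZMod 2) r c + G.adjMatrix (ZMod 2) r v * G.adjMatrix (ZMod 2) w c

theorem cutRankOn_insert_le_rank_schurOn_add_one {V : Type} [DecidableEq V] (G : SimpleGraph V)
    (v w : V) (R C : Finset V) :
    cutRankOn G R (insert v C) ≤ (schurOn G v w R C).rank + 1 := by
  rw [cutRankOn_eq_rankOn, Matrix.rankOn]
  refine Matrix.rank_le_rank_add_one_of_forall_col_mem (u := fun r : R => G.adjMatrix (ZMod 2) r v)
    fun ⟨c, hc⟩ => ?_
  rcases mem_insert.1 hc with rfl | hcC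
  · exact subset_span (Set.mem_insert _ _)
  · have : ((G.adjMatrix (ZMod 2)).submatrix ((↑) : R → V) ((↑) : ↥(insert v C) → V)).col ⟨c, hc⟩
        = (schurOn G v w R C).col ⟨c, hcC⟩ +
          G.adjMatrix (ZMod 2) w c • fun r : R => G.adjMatrix (ZMod 2) r v := by
      ext r
      simp only [Matrix.col_apply, Matrix.submatrix_apply, schurOn, Matrix.of_apply, Pi.add_apply,
        Pi.smul_apply, smul_eq_mul]
      grind
    rw [this]
    exact add_mem (subset_span (Set.mem_insert_of_mem _ ⟨_, rfl⟩))
      (smul_mem _ _ (subset_span (Set.mem_insert _ _)))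

theorem rank_schurOn_le_cutRankOn_pivot {G : SimpleGraph V} {v w : V} {Y₁ Y₂ : Finset V}
    (hvw : G.Adj v w) (hv₁ : v ∉ Y₁) (hv₂ : v ∉ Y₂) (hw₁ : w ∈ Y₁) (hw₂ : w ∉ Y₂) :
    (schurOn G v w (insert v Y₁) Y₂).rank ≤ cutRankOn (pivot G v w) Y₁ Y₂ := by
  set B := ((pivot G v w).adjMatrix (ZMod 2)).submatrix ((↑) : Y₁ → V) ((↑) : Y₂ → V)
  have hne : ∀ {y}, y ∈ Y₂ → y ≠ v ∧ y ≠ w := fun hy => ⟨by grind, by grind⟩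
  refine Matrix.rank_le_rank_of_forall_row_mem fun ⟨x, hx⟩ => ?_
  rcases mem_insert.1 hx with hxv | hx₁
  · subst x
    have : (schurOn G v w (insert v Y₁) Y₂).row ⟨v, hx⟩ = B.row ⟨w, hw₁⟩ := by
      ext c
      simp only [schurOn, B, Matrix.row_apply, Matrix.of_apply, Matrix.submatrix_apply,
        adjMatrix_pivot_apply_right (hne c.2).1 (hne c.2).2, G.adjMatrix_apply, G.irrefl,
        if_false, zero_mul, add_zero]
    exact this ▸ subset_span ⟨_, rfl⟩
  by_cases hxw : x = w
  · subst x
    have : (schurOn G v w (insert v Y₁) Y₂).row ⟨w, hx⟩ = 0 := by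
      ext c
      simp only [schurOn, Matrix.row_apply, Matrix.of_apply, adjMatrix_apply, if_pos hvw.symm,
        one_mul, Pi.zero_apply]
      exact CharTwo.add_self_eq_zero _
    exact this ▸ zero_mem _
  have hxv : x ≠ v := by grind
  have hsymm : G.adjMatrix (ZMod 2) x v = G.adjMatrix (ZMod 2) v x := by simp [G.adj_comm]
  have : (schurOn G v w (insert v Y₁) Y₂).row ⟨x, hx⟩ =
      B.row ⟨x, hx₁⟩ + G.adjMatrix (ZMod 2) w x • B.row ⟨w, hw₁⟩ := by
    ext c
    simp only [schurOn, B, Matrix.row_apply, Matrix.of_apply, Matrix.submatrix_apply,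
      Pi.add_apply, Pi.smul_apply, smul_eq_mul, adjMatrix_pivot_apply_right (hne c.2).1 (hne c.2).2,
      adjMatrix_pivot_apply hxv hxw (hne c.2).1 (hne c.2).2, hsymm]
    grind
  exact this ▸ add_mem (subset_span ⟨_, rfl⟩) (smul_mem _ _ (subset_span ⟨_, rfl⟩))

theorem cutRankOn_insert_le_pivot {G : SimpleGraph V} {v w : V} {Y₁ Y₂ : Finset V}
    (hvw : G.Adj v w) (hv₁ : v ∉ Y₁) (hv₂ : v ∉ Y₂) (hd : Disjoint Y₁ Y₂) (hw : w ∈ Y₁ ∪ Y₂) :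
    cutRankOn G (insert v Y₁) (insert v Y₂) ≤ cutRankOn (pivot G v w) Y₁ Y₂ + 1 := by
  wlog hw₁ : w ∈ Y₁ generalizing Y₁ Y₂
  · rw [cutRankOn_comm, cutRankOn_comm (pivot G v w)]
    exact this hv₂ hv₁ hd.symm (by rwa [union_comm]) (by grind)
  exact (cutRankOn_insert_le_rank_schurOn_add_one G v w _ _).trans <| Nat.add_le_add_right
    (rank_schurOn_le_cutRankOn_pivot hvw hv₁ hv₂ hw₁ (disjoint_left.1 hd hw₁)) 1

theorem sdiff_inter_eq_union_insert {v : V} {X₁ X₂ Y₁ Y₂ : Finset V}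
    (hX : X₁ ∪ X₂ = univ \ {v}) (hXd : Disjoint X₁ X₂)
    (hY : Y₁ ∪ Y₂ = univ \ {v}) (hYd : Disjoint Y₁ Y₂) :
    univ \ (X₁ ∩ Y₁) = X₂ ∪ insert v Y₂ := by
  ext x
  have hx := Finset.ext_iff.1 hX x
  have hy := Finset.ext_iff.1 hY x
  have hx' : x ∈ X₁ → x ∉ X₂ := fun h => disjoint_left.1 hXd h
  have hy' : x ∈ Y₁ → x ∉ Y₂ := fun h => disjoint_left.1 hYd h
  simp only [mem_union, mem_sdiff, mem_univ, mem_singleton, true_and, mem_inter,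
    mem_insert] at *
  tauto

theorem cutRank_bixby {G : SimpleGraph V} {v w : V} (hvw : G.Adj v w)
    {X1 X2 Y1 Y2 : Finset V}
    (hX : X1 ∪ X2 = Finset.univ \ {v}) (hXd : Disjoint X1 X2)
    (hY : Y1 ∪ Y2 = Finset.univ \ {v}) (hYd : Disjoint Y1 Y2) :
    cutRank G Finset.univ (X1 ∩ Y1) + cutRank G Finset.univ (X2 ∩ Y2) ≤
      cutRank G (Finset.univ \ {v}) X1 + cutRank (pivot G v w) (Finset.univ \ {v}) Y1 + 1 := by
  have hvX : v ∉ X1 ∪ X2 := by simp [hX]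
  have hvY : v ∉ Y1 ∪ Y2 := by simp [hY]
  have hwY : w ∈ Y1 ∪ Y2 := by simp [hY, hvw.ne']
  have hsub := cutRankOn_inter_union_add_le G X1 (insert v Y1) X2 (insert v Y2)
  rw [inter_insert_of_notMem (by grind), inter_insert_of_notMem (by grind),
    ← sdiff_inter_eq_union_insert hX hXd hY hYd,
    ← sdiff_inter_eq_union_insert (by rwa [union_comm]) hXd.symm
      (by rwa [union_comm]) hYd.symm, cutRankOn_comm G (univ \ _)] at hsub
  have hpiv := cutRankOn_insert_le_pivot hvw (by grind) (by grind) hYd hwY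
  have hX₂ : (univ \ {v}) \ X1 = X2 := by rw [← hX, union_sdiff_cancel_left hXd]
  have hY₂ : (univ \ {v}) \ Y1 = Y2 := by rw [← hY, union_sdiff_cancel_left hYd]
  rw [cutRank, cutRank, cutRank, cutRank, hX₂, hY₂]
  omega
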